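/- arXiv:2111.03873 — 4 statements merged into one kernel-verified Lean document; each statement's English description precedes it below -/
import Mathlib

section
/- Let U ⊆ ℝⁿ × ℝ be open, let u_i, u_e, I : U → ℝ be smooth functions, let σ_i > 0, σ_e > 0, ε > 0, C_m ∈ ℝ and χ ≠ 0. Assume on U: (a) σ_i·Δ_x u_i + σ_e·Δ_x u_e = 0; (b) (1/(2χ))·(σ_i·Δ_x u_i − σ_e·Δ_x u_e) = C_m·∂_t(u_i − u_e) + I; (c) ∂_t(Δ_x u_e) = −(1/ε)·(σ_e·Δ_x u_e + χ·I). Then u_e satisfies on U the fourth-order equation (σ_i σ_e ε/(σ_e + σ_i))·Δ_x² u_e = −χ C_m·(σ_e·Δ_x u_e + χ·I) − (χ σ_i ε/(σ_e + σ_i))·Δ_x I. -/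
open Set

/-- Spatial Laplacian `Δ_x f(x,t) = ∑_j ∂²_{x_j} f(x,t)` of a function on `ℝⁿ × ℝ`. -/
noncomputable def spatialLaplacian (n : ℕ) (f : (Fin n → ℝ) × ℝ → ℝ)
    (p : (Fin n → ℝ) × ℝ) : ℝ :=
  ∑ j : Fin n,
    fderiv ℝ (fun x => fderiv ℝ (fun x' => f (x', p.2)) x (Pi.single j 1)) p.1
      (Pi.single j 1)

/-- Time derivative `∂_t f(x,t)` of a function on `ℝⁿ × ℝ`. -/
noncomputable def timeDeriv' (n : ℕ) (f : (Fin n → ℝ) × ℝ → ℝ)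
    (p : (Fin n → ℝ) × ℝ) : ℝ :=
  deriv (fun s => f (p.1, s)) p.2

open ContDiff Filter Topology

namespace BidomainAux

variable {n : ℕ}

/-- Directional derivative operator. -/
noncomputable def Dv (v : (Fin n → ℝ) × ℝ) (f : (Fin n → ℝ) × ℝ → ℝ) :
    (Fin n → ℝ) × ℝ → ℝ :=
  fun q => fderiv ℝ f q v

/-- Spatial directions. -/
def ej (j : Fin n) : (Fin n → ℝ) × ℝ := (Pi.single j 1, 0)

/-- Time direction. -/
def tw (n : ℕ) : (Fin n → ℝ) × ℝ := (0, 1)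

lemma two_le_infty : (2 : WithTop ℕ∞) ≤ ∞ := by
  have h : ((2 : ℕ∞) : WithTop ℕ∞) ≤ ((⊤ : ℕ∞) : WithTop ℕ∞) := WithTop.coe_le_coe.mpr le_top
  simpa using h

lemma infty_add_one_le : (∞ : WithTop ℕ∞) + 1 ≤ ∞ := le_of_eq rfl

lemma Dv_contDiffAt {f : (Fin n → ℝ) × ℝ → ℝ} {q} (v)
    (hf : ContDiffAt ℝ ∞ f q) : ContDiffAt ℝ ∞ (Dv v f) q :=
  (hf.fderiv_right infty_add_one_le).clm_apply contDiffAt_const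

lemma Dv_congr_nhds {f g : (Fin n → ℝ) × ℝ → ℝ} {q} (v)
    (h : f =ᶠ[𝓝 q] g) : Dv v f =ᶠ[𝓝 q] Dv v g :=
  (h.fderiv (𝕜 := ℝ)).mono fun _ hx => by simp only [Dv, hx]

lemma Dv_congr {f g : (Fin n → ℝ) × ℝ → ℝ} {q} (v)
    (h : f =ᶠ[𝓝 q] g) : Dv v f q = Dv v g q := by
  simp only [Dv, h.fderiv_eq]

/-- Linearity of the directional derivative. -/
lemma Dv_comb {f g : (Fin n → ℝ) × ℝ → ℝ} {q} (v) (a b : ℝ)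
    (hf : DifferentiableAt ℝ f q) (hg : DifferentiableAt ℝ g q) :
    Dv v (fun x => a * f x + b * g x) q = a * Dv v f q + b * Dv v g q := by
  have h : HasFDerivAt (fun x => a * f x + b * g x)
      (a • fderiv ℝ f q + b • fderiv ℝ g q) q :=
    ((hf.hasFDerivAt.const_mul a).add (hg.hasFDerivAt.const_mul b))
  simp only [Dv, h.fderiv]
  simp

/-- Slice lemma for spatial partial derivatives. -/
lemma fderiv_slice {f : (Fin n → ℝ) × ℝ → ℝ} {x : Fin n → ℝ} {t : ℝ} (v0 : Fin n → ℝ)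
    (hf : DifferentiableAt ℝ f (x, t)) :
    fderiv ℝ (fun x' => f (x', t)) x v0 = fderiv ℝ f (x, t) (v0, 0) := by
  have h : HasFDerivAt (fun x' => f (x', t))
      ((fderiv ℝ f (x, t)).comp (ContinuousLinearMap.inl ℝ (Fin n → ℝ) ℝ)) x :=
    hf.hasFDerivAt.comp x (hasFDerivAt_prodMk_left x t)
  rw [h.fderiv]
  rfl

/-- Slice lemma for the time derivative. -/
lemma deriv_slice {f : (Fin n → ℝ) × ℝ → ℝ} {x : Fin n → ℝ} {t : ℝ}
    (hf : DifferentiableAt ℝ f (x, t)) :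
    deriv (fun s => f (x, s)) t = fderiv ℝ f (x, t) (0, 1) := by
  have h : HasDerivAt (fun s => f (x, s))
      (((fderiv ℝ f (x, t)).comp (ContinuousLinearMap.inr ℝ (Fin n → ℝ) ℝ)) 1) t :=
    (hf.hasFDerivAt.comp t (hasFDerivAt_prodMk_right x t)).hasDerivAt
  rw [h.deriv]
  rfl

variable {U : Set ((Fin n → ℝ) × ℝ)}

/-- smooth on `U` -/
def SmU (U : Set ((Fin n → ℝ) × ℝ)) (f : (Fin n → ℝ) × ℝ → ℝ) : Prop :=
  ∀ q ∈ U, ContDiffAt ℝ ∞ f q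

lemma SmU.dv {f} (hf : SmU U f) (v) : SmU U (Dv v f) :=
  fun q hq => Dv_contDiffAt v (hf q hq)

lemma SmU.diff {f} (hf : SmU U f) {q} (hq : q ∈ U) : DifferentiableAt ℝ f q :=
  (hf q hq).differentiableAt (by simp)

lemma SmU.comb {f g} (hf : SmU U f) (hg : SmU U g) (a b : ℝ) :
    SmU U (fun x => a * f x + b * g x) :=
  fun q hq => (contDiffAt_const.mul (hf q hq)).add (contDiffAt_const.mul (hg q hq))

/-- `timeDeriv'` equals the directional derivative along `tw` for smooth functions. -/
lemma time_eq (hU : IsOpen U) {f p} (hf : SmU U f) (hp : p ∈ U) :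
    timeDeriv' n f p = Dv (tw n) f p := by
  obtain ⟨x, t⟩ := p
  rw [timeDeriv', deriv_slice (hf.diff hp)]
  rfl

/-- `spatialLaplacian` equals the sum of second directional derivatives for smooth
functions on an open set. -/
lemma lap_eq (hU : IsOpen U) {f p} (hf : SmU U f) (hp : p ∈ U) :
    spatialLaplacian n f p = ∑ j : Fin n, Dv (ej j) (Dv (ej j) f) p := by
  obtain ⟨x, t⟩ := p
  rw [spatialLaplacian]
  refine Finset.sum_congr rfl fun j _ => ?_
  have hV : IsOpen {y : Fin n → ℝ | (y, t) ∈ U} :=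
    hU.preimage (by fun_prop : Continuous fun y : Fin n → ℝ => (y, t))
  have hev : (fun y => fderiv ℝ (fun x' => f (x', t)) y (Pi.single j 1))
      =ᶠ[𝓝 x] fun y => Dv (ej j) f (y, t) := by
    filter_upwards [hV.mem_nhds hp] with y hy
    rw [fderiv_slice _ (hf.diff hy)]
    rfl
  rw [hev.fderiv_eq, fderiv_slice _ ((hf.dv (ej j)).diff hp)]
  rfl

/-- Second directional derivatives commute for smooth functions. -/
lemma Dv_swap {f q} (a b : (Fin n → ℝ) × ℝ) (hf : ContDiffAt ℝ ∞ f q) :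
    Dv a (Dv b f) q = Dv b (Dv a f) q := by
  have hd : DifferentiableAt ℝ (fderiv ℝ f) q :=
    (hf.fderiv_right infty_add_one_le).differentiableAt (by simp)
  have h : ∀ v w : (Fin n → ℝ) × ℝ, Dv v (Dv w f) q = fderiv ℝ (fderiv ℝ f) q v w := by
    intro v w
    have hcl : HasFDerivAt (fun x => (fderiv ℝ f x) w)
        ((fderiv ℝ (fderiv ℝ f) q).flip w) q := by
      simpa using hd.hasFDerivAt.clm_apply (hasFDerivAt_const w q)
    have hrfl : Dv v (Dv w f) q = fderiv ℝ (fun x => (fderiv ℝ f x) w) q v := rfl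
    rw [hrfl, hcl.fderiv]
    simp
  rw [h a b, h b a, (hf.isSymmSndFDerivAt (by simpa using two_le_infty)) a b]

lemma Dv_swap_U (hU : IsOpen U) {f p} (hf : SmU U f) (hp : p ∈ U)
    (a b c : (Fin n → ℝ) × ℝ) :
    Dv a (Dv b (Dv c f)) p = Dv c (Dv a (Dv b f)) p := by
  have h1 : Dv b (Dv c f) =ᶠ[𝓝 p] Dv c (Dv b f) := by
    filter_upwards [hU.mem_nhds hp] with q hq using Dv_swap b c (hf q hq)
  rw [Dv_congr a h1, Dv_swap a c ((hf.dv b) p hp)]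


/-- second-order spatial operator built from directional derivatives -/
noncomputable def LL (f : (Fin n → ℝ) × ℝ → ℝ) : (Fin n → ℝ) × ℝ → ℝ :=
  fun q => ∑ j : Fin n, Dv (ej j) (Dv (ej j) f) q

lemma SmU.ll {f} (hf : SmU U f) : SmU U (LL f) :=
  fun q hq => ContDiffAt.sum fun j _ => ((hf.dv (ej j)).dv (ej j)) q hq

lemma evU (hU : IsOpen U) {f g : (Fin n → ℝ) × ℝ → ℝ} {p} (hp : p ∈ U)
    (h : ∀ q ∈ U, f q = g q) : f =ᶠ[𝓝 p] g := by
  filter_upwards [hU.mem_nhds hp] with q hq using h q hq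

lemma LL_congr {f g : (Fin n → ℝ) × ℝ → ℝ} {p} (h : f =ᶠ[𝓝 p] g) : LL f p = LL g p :=
  Finset.sum_congr rfl fun j _ => Dv_congr _ (Dv_congr_nhds _ h)

lemma Dv_smul {f : (Fin n → ℝ) × ℝ → ℝ} {q} (v) (a : ℝ)
    (hf : DifferentiableAt ℝ f q) :
    Dv v (fun x => a * f x) q = a * Dv v f q := by
  simp only [Dv, (hf.hasFDerivAt.const_mul a).fderiv]
  simp

lemma Dv_sum {ι : Type*} (s : Finset ι) {g : ι → (Fin n → ℝ) × ℝ → ℝ} {q} (v)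
    (hg : ∀ i ∈ s, DifferentiableAt ℝ (g i) q) :
    Dv v (fun x => ∑ i ∈ s, g i x) q = ∑ i ∈ s, Dv v (g i) q := by
  have h : HasFDerivAt (fun x => ∑ i ∈ s, g i x) (∑ i ∈ s, fderiv ℝ (g i) q) q :=
    HasFDerivAt.fun_sum fun i hi => (hg i hi).hasFDerivAt
  simp only [Dv, h.fderiv, ContinuousLinearMap.sum_apply]

lemma LL_comb (hU : IsOpen U) {f g : (Fin n → ℝ) × ℝ → ℝ} {p}
    (hf : SmU U f) (hg : SmU U g) (hp : p ∈ U) (a b : ℝ) :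
    LL (fun x => a * f x + b * g x) p = a * LL f p + b * LL g p := by
  simp only [LL]
  rw [Finset.mul_sum, Finset.mul_sum, ← Finset.sum_add_distrib]
  refine Finset.sum_congr rfl fun j _ => ?_
  have h1 : Dv (ej j) (fun x => a * f x + b * g x) =ᶠ[𝓝 p]
      fun q => a * Dv (ej j) f q + b * Dv (ej j) g q := by
    filter_upwards [hU.mem_nhds hp] with q hq using
      Dv_comb (ej j) a b (hf.diff hq) (hg.diff hq)
  rw [Dv_congr _ h1, Dv_comb (ej j) a b ((hf.dv (ej j)).diff hp) ((hg.dv (ej j)).diff hp)]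

lemma LL_smul (hU : IsOpen U) {f : (Fin n → ℝ) × ℝ → ℝ} {p}
    (hf : SmU U f) (hp : p ∈ U) (a : ℝ) :
    LL (fun x => a * f x) p = a * LL f p := by
  rw [show (fun x => a * f x) = fun x => a * f x + 0 * f x from funext fun x => by ring,
    LL_comb hU hf hf hp a 0]
  ring

lemma LL_time_swap (hU : IsOpen U) {f : (Fin n → ℝ) × ℝ → ℝ} {p}
    (hf : SmU U f) (hp : p ∈ U) :
    Dv (tw n) (LL f) p = LL (Dv (tw n) f) p := by
  have hLLf : LL f = fun x => ∑ i : Fin n, Dv (ej i) (Dv (ej i) f) x := rfl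
  rw [hLLf, Dv_sum Finset.univ (tw n) fun j _ => ((hf.dv (ej j)).dv (ej j)).diff hp]
  simp only [LL]
  exact Finset.sum_congr rfl fun j _ => (Dv_swap_U hU hf hp (ej j) (ej j) (tw n)).symm

lemma lap_congr (hU : IsOpen U) {f g : (Fin n → ℝ) × ℝ → ℝ} {p} (hp : p ∈ U)
    (h : ∀ q ∈ U, f q = g q) :
    spatialLaplacian n f p = spatialLaplacian n g p := by
  obtain ⟨x, t⟩ := p
  rw [spatialLaplacian, spatialLaplacian]
  refine Finset.sum_congr rfl fun j _ => ?_
  have hV : IsOpen {y : Fin n → ℝ | (y, t) ∈ U} :=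
    hU.preimage (by fun_prop : Continuous fun y : Fin n → ℝ => (y, t))
  have hev : (fun y => fderiv ℝ (fun x' => f (x', t)) y (Pi.single j 1))
      =ᶠ[𝓝 x] fun y => fderiv ℝ (fun x' => g (x', t)) y (Pi.single j 1) := by
    filter_upwards [hV.mem_nhds hp] with y hy
    have hsl : (fun x' => f (x', t)) =ᶠ[𝓝 y] fun x' => g (x', t) := by
      filter_upwards [hV.mem_nhds hy] with z hz using h (z, t) hz
    rw [hsl.fderiv_eq]
  rw [hev.fderiv_eq]

lemma time_congr (hU : IsOpen U) {f g : (Fin n → ℝ) × ℝ → ℝ} {p} (hp : p ∈ U)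
    (h : ∀ q ∈ U, f q = g q) :
    timeDeriv' n f p = timeDeriv' n g p := by
  obtain ⟨x, t⟩ := p
  rw [timeDeriv', timeDeriv']
  apply Filter.EventuallyEq.deriv_eq
  have hV : IsOpen {s : ℝ | (x, s) ∈ U} :=
    hU.preimage (by fun_prop : Continuous fun s : ℝ => (x, s))
  filter_upwards [hV.mem_nhds hp] with s hs using h (x, s) hs

end BidomainAux

open BidomainAux Filter Topology ContDiff

/-- the fourth-order equation for the extracellular potential `u_e`
derived from the steady conservation law, the cable equation and the evolution law
for `Δ_x u_e`. -/
theorem fourth_order_equation_for_ue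
    (n : ℕ) (U : Set ((Fin n → ℝ) × ℝ)) (hU : IsOpen U)
    (ui ue I : (Fin n → ℝ) × ℝ → ℝ)
    (hui : ContDiffOn ℝ (⊤ : ℕ∞) ui U) (hue : ContDiffOn ℝ (⊤ : ℕ∞) ue U) (hI : ContDiffOn ℝ (⊤ : ℕ∞) I U)
    (σi σe ε Cm χ : ℝ) (hσi : 0 < σi) (hσe : 0 < σe) (hε : 0 < ε) (hχ : χ ≠ 0)
    (ha : ∀ p ∈ U, σi * spatialLaplacian n ui p + σe * spatialLaplacian n ue p = 0)
    (hb : ∀ p ∈ U, (1 / (2 * χ)) *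
        (σi * spatialLaplacian n ui p - σe * spatialLaplacian n ue p) =
      Cm * timeDeriv' n (fun q => ui q - ue q) p + I p)
    (hc : ∀ p ∈ U, timeDeriv' n (spatialLaplacian n ue) p =
      -(1 / ε) * (σe * spatialLaplacian n ue p + χ * I p)) :
    ∀ p ∈ U,
      (σi * σe * ε / (σe + σi)) * spatialLaplacian n (spatialLaplacian n ue) p =
        -(χ * Cm) * (σe * spatialLaplacian n ue p + χ * I p) -
          (χ * σi * ε / (σe + σi)) * spatialLaplacian n I p := by
  intro p hp
  have sui : SmU U ui := fun q hq => (hui.contDiffAt (hU.mem_nhds hq)).of_le (by simp)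
  have sue : SmU U ue := fun q hq => (hue.contDiffAt (hU.mem_nhds hq)).of_le (by simp)
  have sI : SmU U I := fun q hq => (hI.contDiffAt (hU.mem_nhds hq)).of_le (by simp)
  have suid : SmU U (fun x => ui x - ue x) := fun q hq => (sui q hq).sub (sue q hq)
  have hlapui : ∀ q ∈ U, spatialLaplacian n ui q = LL ui q := fun q hq => lap_eq hU sui hq
  have hlapue : ∀ q ∈ U, spatialLaplacian n ue q = LL ue q := fun q hq => lap_eq hU sue hq
  have hlapI : ∀ q ∈ U, spatialLaplacian n I q = LL I q := fun q hq => lap_eq hU sI hq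
  have hss : σe + σi ≠ 0 := by positivity
  -- step 1: from (a)
  have h1 : ∀ q ∈ U, LL ui q = (-σe / σi) * LL ue q := by
    intro q hq
    have h := ha q hq
    rw [hlapui q hq, hlapue q hq] at h
    field_simp
    linarith
  -- step 2: from (b) and step 1
  have h2 : ∀ q ∈ U, Cm * Dv (tw n) (fun x => ui x - ue x) q
      = (-σe / χ) * LL ue q - I q := by
    intro q hq
    have h := hb q hq
    rw [hlapui q hq, hlapue q hq, time_eq hU suid hq] at h
    have e1 := ha q hq
    rw [hlapui q hq, hlapue q hq] at e1
    field_simp at h ⊢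
    linarith
  -- step 3: Laplacian of ui - ue
  have h3 : ∀ q ∈ U, LL (fun x => ui x - ue x) q = (-(σe + σi) / σi) * LL ue q := by
    intro q hq
    rw [show (fun x => ui x - ue x) = fun x => (1 : ℝ) * ui x + (-1) * ue x from
      funext fun x => by ring, LL_comb hU sui sue hq 1 (-1), h1 q hq]
    field_simp
    ring
  -- apply LL to step 2
  have key : LL (fun q => Cm * Dv (tw n) (fun x => ui x - ue x) q) p
      = LL (fun q => (-σe / χ) * LL ue q - I q) p := LL_congr (evU hU hp h2)
  have l1 : LL (fun q => Cm * Dv (tw n) (fun x => ui x - ue x) q) p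
      = Cm * LL (Dv (tw n) (fun x => ui x - ue x)) p :=
    LL_smul hU (suid.dv (tw n)) hp Cm
  have l2 : LL (Dv (tw n) (fun x => ui x - ue x)) p
      = Dv (tw n) (LL (fun x => ui x - ue x)) p := (LL_time_swap hU suid hp).symm
  have l3 : Dv (tw n) (LL (fun x => ui x - ue x)) p
      = Dv (tw n) (fun q => (-(σe + σi) / σi) * LL ue q) p := Dv_congr _ (evU hU hp h3)
  have l4 : Dv (tw n) (fun q => (-(σe + σi) / σi) * LL ue q) p
      = (-(σe + σi) / σi) * Dv (tw n) (LL ue) p :=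
    Dv_smul _ _ ((sue.ll).diff hp)
  have l5 : Dv (tw n) (LL ue) p = -(1 / ε) * (σe * LL ue p + χ * I p) := by
    have hcp := hc p hp
    rw [time_congr hU hp hlapue, time_eq hU sue.ll hp, hlapue p hp] at hcp
    exact hcp
  have r1 : LL (fun q => (-σe / χ) * LL ue q - I q) p
      = (-σe / χ) * LL (LL ue) p + (-1) * LL I p := by
    rw [show (fun q => (-σe / χ) * LL ue q - I q)
        = fun q => (-σe / χ) * LL ue q + (-1) * I q from funext fun q => by ring]
    exact LL_comb hU sue.ll sI hp _ _
  have c1 : spatialLaplacian n (spatialLaplacian n ue) p = LL (LL ue) p := by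
    rw [lap_congr hU hp hlapue]
    exact lap_eq hU sue.ll hp
  rw [c1, hlapue p hp, hlapI p hp]
  rw [l1, l2, l3, l4, l5, r1] at key
  field_simp at key ⊢
  linarith
end

section
/- Let Ω_m ⊆ ℝⁿ be open, let σ_i > 0, λ > 0 and set σ_e = λσ_i. Let u : ℝⁿ → ℝ be a smooth function whose (closed) support is a compact subset of Ω_m, and let c ∈ ℝ. Define u_e := u and u_i := −λ·u + c. Then: (i) σ_i·Δu_i + σ_e·Δu_e = 0 on all of ℝⁿ, i.e. the pair (u_i, u_e) satisfies the steady bidomain equation Δ_i u_i + Δ_e u_e = 0 in Ω_m with Δ_i = −σ_iΔ, Δ_e = −σ_eΔ; (ii) on the open set ℝⁿ \ supp u, which contains ℝⁿ \ Ω_m and hence a neighbourhood of ∂Ω_m, one has u_e = 0, ∇u_e = 0 and ∇u_i = 0. Consequently, together with u_b ≡ 0 on the body domain, every such pair (u_i, u_e) lies in the null-space of the steady inverse electrocardiography problem, so that the problem of recovering (u_i, u_e, u_b) from the body-surface potential has infinitely many solutions. -/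
open Set

/-- The Laplacian `Δf(x) = ∑_j ∂²_{x_j} f(x)` of a function on `ℝⁿ`. -/
noncomputable def laplacianN (n : ℕ) (f : (Fin n → ℝ) → ℝ) (x : Fin n → ℝ) : ℝ :=
  ∑ j : Fin n,
    fderiv ℝ (fun x' => fderiv ℝ f x' (Pi.single j 1)) x (Pi.single j 1)

/-- for proportional scalar conductivities `σ_e = λσ_i`, every smooth `u`
compactly supported in `Ω_m` yields, via `u_e := u`, `u_i := -λu + c`, an element of the
null-space of the steady inverse electrocardiography problem: the steady bidomain
equation holds everywhere, and near (and outside) `∂Ω_m` all data vanish. -/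
theorem null_space_of_steady_bidomain
    (n : ℕ) (hn : 1 ≤ n) (Ωm : Set (Fin n → ℝ)) (hΩm : IsOpen Ωm)
    (σi lam σe : ℝ) (hσi : 0 < σi) (hlam : 0 < lam) (hσe : σe = lam * σi)
    (u : (Fin n → ℝ) → ℝ) (hu : ContDiff ℝ (⊤ : ℕ∞) u)
    (hcomp : IsCompact (tsupport u)) (hsupp : tsupport u ⊆ Ωm)
    (c : ℝ) (ue ui : (Fin n → ℝ) → ℝ)
    (hue : ∀ x, ue x = u x) (hui : ∀ x, ui x = -lam * u x + c) :
    (∀ x, σi * laplacianN n ui x + σe * laplacianN n ue x = 0) ∧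
    (∀ x ∉ tsupport u, ue x = 0 ∧ fderiv ℝ ue x = 0 ∧ fderiv ℝ ui x = 0) ∧
    (∀ x ∉ Ωm, x ∉ tsupport u) := by
  have hueq : ue = u := funext hue
  have huieq : ui = fun x => -lam * u x + c := funext hui
  subst hueq huieq hσe
  have hud : Differentiable ℝ ue := hu.differentiable (by simp)
  have hfd : ∀ v : Fin n → ℝ, Differentiable ℝ (fun x' => fderiv ℝ ue x' v) := by
    intro v
    exact ((hu.fderiv_right (m := 1) (by exact WithTop.coe_le_coe.mpr le_top)).clm_apply contDiff_const).differentiable one_ne_zero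
  have hfui : ∀ x, fderiv ℝ (fun x => -lam * ue x + c) x = -lam • fderiv ℝ ue x := by
    intro x
    rw [fderiv_add_const, fderiv_const_mul (hud x)]
  refine ⟨?_, ?_, ?_⟩
  · intro x
    have h1 : laplacianN n (fun x => -lam * ue x + c) x = -lam * laplacianN n ue x := by
      unfold laplacianN
      rw [Finset.mul_sum]
      congr 1; funext j
      have heq : (fun x' => fderiv ℝ (fun x => -lam * ue x + c) x' (Pi.single j 1))
          = fun x' => -lam * fderiv ℝ ue x' (Pi.single j 1) := by
        funext x'; rw [hfui]; simp
      rw [heq, fderiv_const_mul (hfd _ x)]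
      simp
    rw [h1]; unfold laplacianN; ring
  · intro x hx
    have h0 : ue x = 0 := image_eq_zero_of_notMem_tsupport hx
    have hf0 : fderiv ℝ ue x = 0 := by
      have := support_fderiv_subset ℝ (f := ue)
      by_contra h
      exact hx (this (by simpa [Function.mem_support] using h))
    refine ⟨h0, hf0, ?_⟩
    rw [hfui, hf0, smul_zero]
  · intro x hx h
    exact hx (hsupp h)
end

section
/- Let n ≥ 1, let M be a real symmetric positive definite n×n matrix, let t > 0 be fixed, let Ω ⊆ ℝⁿ be a bounded measurable set and let h : ℝⁿ → ℝ be integrable on Ω. Then the Poisson-type integral x ↦ ∫_Ω Ψ_M(x,y,t)·h(y) dy is a real-analytic function of x on all of ℝⁿ. -/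
open Matrix MeasureTheory Bornology

/-!
Expanding the quadratic form in the exponent,
`Ψ_M(x,y,t) = Ψ_M(x,0,t) · exp(-yᵀM⁻¹y / 4t) · exp(L_y x)` where `L_y` is a linear functional
depending linearly on `y`. On the bounded set `Ω` these functionals are uniformly bounded, so
integrating the exponential series of `exp(L_y x)` term by term against the integrable weight
`exp(-yᵀM⁻¹y / 4t) h(y)` yields a power series in `x` with infinite radius of convergence.
-/

/-- The Gaussian kernel `Ψ_M(x,y,s)` associated with a positive definite matrix `M`. -/
noncomputable def gaussKernel (n : ℕ) (M : Matrix (Fin n) (Fin n) ℝ)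
    (x y : Fin n → ℝ) (s : ℝ) : ℝ :=
  (2 * Real.sqrt (Real.pi * M.det * s)) ^ (-(n : ℤ)) *
    Real.exp (-((x - y) ⬝ᵥ (M⁻¹).mulVec (x - y)) / (4 * s))

open scoped ENNReal NNReal

namespace FormalMultilinearSeries

variable {E F G Y : Type*} [NormedAddCommGroup E] [NormedSpace ℝ E]
  [NormedAddCommGroup F] [NormedSpace ℝ F] [NormedAddCommGroup G] [NormedSpace ℝ G]
  [MeasurableSpace Y] {μ : Measure Y} {g : Y → ℝ} {L : Y → E →L[ℝ] F} {R : ℝ≥0}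

theorem continuous_compContinuousLinearMap (q : FormalMultilinearSeries ℝ F G) (k : ℕ) :
    Continuous fun u : E →L[ℝ] F => q.compContinuousLinearMap u k :=
  ((ContinuousMultilinearMap.compContinuousLinearMapContinuousMultilinear ℝ
    (fun _ : Fin k => E) (fun _ => F) G).cont.comp
      (continuous_pi fun _ => continuous_id)).clm_apply continuous_const

/-- The power series at `0` of `x ↦ ∫ y, g y • f (L y x) ∂μ` when `q` is that of `f`. -/
noncomputable def integralSMulComp (q : FormalMultilinearSeries ℝ F G) (μ : Measure Y)
    (g : Y → ℝ) (L : Y → E →L[ℝ] F) : FormalMultilinearSeries ℝ E G :=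
  fun k => ∫ y, g y • q.compContinuousLinearMap (L y) k ∂μ

variable (q : FormalMultilinearSeries ℝ F G)

theorem ae_norm_smul_compContinuousLinearMap_le (hLR : ∀ᵐ y ∂μ, ‖L y‖ ≤ R) (k : ℕ) :
    ∀ᵐ y ∂μ, ‖g y • q.compContinuousLinearMap (L y) k‖ ≤ ‖g y‖ * (‖q k‖ * R ^ k) := by
  filter_upwards [hLR] with y hy
  rw [norm_smul]
  gcongr
  exact (q.norm_compContinuousLinearMap_le _ k).trans (by gcongr)

theorem integrable_smul_compContinuousLinearMap (hg : Integrable g μ)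
    (hL : AEStronglyMeasurable L μ) (hLR : ∀ᵐ y ∂μ, ‖L y‖ ≤ R) (k : ℕ) :
    Integrable (fun y => g y • q.compContinuousLinearMap (L y) k) μ :=
  (hg.norm.mul_const _).mono'
    (hg.1.smul ((q.continuous_compContinuousLinearMap k).comp_aestronglyMeasurable hL))
    (q.ae_norm_smul_compContinuousLinearMap_le hLR k)

theorem norm_integralSMulComp_le (hg : Integrable g μ) (hLR : ∀ᵐ y ∂μ, ‖L y‖ ≤ R) (k : ℕ) :
    ‖q.integralSMulComp μ g L k‖ ≤ (∫ y, ‖g y‖ ∂μ) * (‖q k‖ * R ^ k) := by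
  rw [← integral_mul_const]
  exact norm_integral_le_of_norm_le (hg.norm.mul_const _)
    (q.ae_norm_smul_compContinuousLinearMap_le hLR k)

theorem radius_integralSMulComp (hq : q.radius = ∞) (hg : Integrable g μ)
    (hLR : ∀ᵐ y ∂μ, ‖L y‖ ≤ R) : (q.integralSMulComp μ g L).radius = ∞ := by
  refine radius_eq_top_of_summable_norm _ fun r => ?_
  refine .of_nonneg_of_le (fun k => by positivity) (fun k => ?_)
    ((q.summable_norm_mul_pow (r := R * r) (hq ▸ ENNReal.coe_lt_top)).mul_left (∫ y, ‖g y‖ ∂μ))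
  calc ‖q.integralSMulComp μ g L k‖ * r ^ k
      ≤ (∫ y, ‖g y‖ ∂μ) * (‖q k‖ * R ^ k) * r ^ k := by
        gcongr; exact q.norm_integralSMulComp_le hg hLR k
    _ = (∫ y, ‖g y‖ ∂μ) * (‖q k‖ * ↑(R * r) ^ k) := by push_cast; ring

theorem integralSMulComp_apply_diag (hg : Integrable g μ) (hL : AEStronglyMeasurable L μ)
    (hLR : ∀ᵐ y ∂μ, ‖L y‖ ≤ R) (k : ℕ) (x : E) :
    q.integralSMulComp μ g L k (fun _ => x) = ∫ y, g y • q k (fun _ => L y x) ∂μ :=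
  ContinuousMultilinearMap.integral_apply
    (q.integrable_smul_compContinuousLinearMap hg hL hLR k) _

theorem hasSum_integralSMulComp {f : F → G} (hf : HasFPowerSeriesOnBall f q 0 ∞)
    (hg : Integrable g μ) (hL : AEStronglyMeasurable L μ) (hLR : ∀ᵐ y ∂μ, ‖L y‖ ≤ R) (x : E) :
    HasSum (fun k => q.integralSMulComp μ g L k (fun _ => x)) (∫ y, g y • f (L y x) ∂μ) := by
  set T : ℕ → Y → G := fun k y => g y • q k (fun _ => L y x)
  have hT : ∀ k, Integrable (T k) μ := fun k =>
    (ContinuousMultilinearMap.apply ℝ _ G fun _ => x).integrable_comp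
      (q.integrable_smul_compContinuousLinearMap hg hL hLR k)
  have hT_le : ∀ k, ∫ y, ‖T k y‖ ∂μ ≤ (∫ y, ‖g y‖ ∂μ) * (‖q k‖ * ↑(R * ‖x‖₊) ^ k) := by
    intro k
    rw [← integral_mul_const]
    refine integral_mono_ae (hT k).norm (hg.norm.mul_const _) ?_
    filter_upwards [q.ae_norm_smul_compContinuousLinearMap_le hLR k] with y hy
    calc ‖T k y‖ ≤ ‖g y • q.compContinuousLinearMap (L y) k‖ * ∏ _ : Fin k, ‖x‖ :=
          (g y • q.compContinuousLinearMap (L y) k).le_opNorm _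
      _ ≤ ‖g y‖ * (‖q k‖ * R ^ k) * ‖x‖ ^ k := by
          simp only [Finset.prod_const, Finset.card_fin]; gcongr
      _ = ‖g y‖ * (‖q k‖ * ↑(R * ‖x‖₊) ^ k) := by push_cast; ring
  have hsum : Summable fun k => ∫ y, ‖T k y‖ ∂μ :=
    .of_nonneg_of_le (fun k => integral_nonneg fun _ => norm_nonneg _) hT_le
      ((q.summable_norm_mul_pow (hf.r_le.trans_lt' ENNReal.coe_lt_top)).mul_left _)
  have hpoint : ∀ y, HasSum (fun k => T k y) (g y • f (L y x)) := fun y => by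
    simpa using (hf.hasSum (y := L y x) (by simp)).const_smul (g y)
  simp_rw [q.integralSMulComp_apply_diag hg hL hLR, ← fun y => (hpoint y).tsum_eq]
  exact hasSum_integral_of_summable_integral_norm hT hsum

variable [CompleteSpace G]

theorem analyticOnNhd_integral_smul_comp {f : F → G} (hf : HasFPowerSeriesOnBall f q 0 ∞)
    (hg : Integrable g μ) (hL : AEStronglyMeasurable L μ) (hLR : ∀ᵐ y ∂μ, ‖L y‖ ≤ R) :
    AnalyticOnNhd ℝ (fun x => ∫ y, g y • f (L y x) ∂μ) Set.univ := by
  have hseries : HasFPowerSeriesOnBall (fun x => ∫ y, g y • f (L y x) ∂μ)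
      (q.integralSMulComp μ g L) 0 ∞ :=
    { r_le := (q.radius_integralSMulComp (top_le_iff.1 hf.r_le) hg hLR).ge
      r_pos := ENNReal.zero_lt_top
      hasSum := fun _ => by simpa using q.hasSum_integralSMulComp hf hg hL hLR _ }
  exact fun x _ => hseries.analyticAt_of_mem (by simp)

end FormalMultilinearSeries

theorem Bornology.IsBounded.exists_ae_restrict_norm_le {X F : Type*} [PseudoMetricSpace X]
    [ProperSpace X] [MeasurableSpace X] [OpensMeasurableSpace X] [SeminormedAddGroup F]
    {μ : Measure X} {s : Set X} (hs : IsBounded s) {f : X → F} (hf : Continuous f) :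
    ∃ C : ℝ≥0, ∀ᵐ y ∂μ.restrict s, ‖f y‖ ≤ C := by
  obtain ⟨C, hC⟩ := hs.isCompact_closure.exists_bound_of_continuousOn hf.continuousOn
  exact ⟨C.toNNReal, (ae_restrict_iff (measurableSet_le hf.norm.measurable measurable_const)).2
    (ae_of_all _ fun y hy => (hC y (subset_closure hy)).trans (Real.le_coe_toNNReal C))⟩

theorem Matrix.toBilin'_toContinuousBilinearMap_apply {ι : Type*} [Fintype ι] [DecidableEq ι]
    (A : Matrix ι ι ℝ) (u v : ι → ℝ) :
    (Matrix.toBilin' A).toContinuousBilinearMap u v = u ⬝ᵥ A *ᵥ v := by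
  simp [Matrix.toBilin'_apply']

theorem Matrix.analyticAt_dotProduct_mulVec_self {ι : Type*} [Fintype ι] (A : Matrix ι ι ℝ)
    (x : ι → ℝ) : AnalyticAt ℝ (fun x => x ⬝ᵥ A *ᵥ x) x := by
  classical
  have := (A.toBilin'.toContinuousBilinearMap.analyticAt_bilinear (x, x)).comp
    (f := fun y => (y, y)) (by fun_prop)
  simpa only [Function.comp_def, toBilin'_toContinuousBilinearMap_apply] using this

theorem analyticOnNhd_gaussKernel_left (n : ℕ) (M : Matrix (Fin n) (Fin n) ℝ) (y : Fin n → ℝ)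
    (t : ℝ) : AnalyticOnNhd ℝ (fun x => gaussKernel n M x y t) Set.univ := by
  intro x _
  have hQ : AnalyticAt ℝ (fun x => (x - y) ⬝ᵥ M⁻¹ *ᵥ (x - y)) x :=
    (M⁻¹.analyticAt_dotProduct_mulVec_self (x - y)).comp (f := fun x => x - y) (by fun_prop)
  unfold gaussKernel
  fun_prop

theorem gaussKernel_eq_mul_exp (n : ℕ) (M : Matrix (Fin n) (Fin n) ℝ) (x y : Fin n → ℝ)
    (t : ℝ) : gaussKernel n M x y t = gaussKernel n M x 0 t *
      Real.exp (-(y ⬝ᵥ M⁻¹ *ᵥ y) / (4 * t)) *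
      Real.exp ((4 * t)⁻¹ * (y ⬝ᵥ M⁻¹ *ᵥ x + x ⬝ᵥ M⁻¹ *ᵥ y)) := by
  simp only [gaussKernel, sub_zero, mul_assoc, ← Real.exp_add]
  congr 3
  simp only [mulVec_sub, dotProduct_sub, sub_dotProduct]
  ring

theorem poisson_integral_analytic_general
    (n : ℕ) (M : Matrix (Fin n) (Fin n) ℝ)
    (t : ℝ)
    (Ω : Set (Fin n → ℝ)) (hΩbd : IsBounded Ω)
    (h : (Fin n → ℝ) → ℝ) (hh : IntegrableOn h Ω) :
    AnalyticOnNhd ℝ (fun x => ∫ y in Ω, gaussKernel n M x y t * h y) Set.univ := by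
  set β := (Matrix.toBilin' M⁻¹).toContinuousBilinearMap
  set L := (4 * t)⁻¹ • (β + β.flip)
  set w := fun y => Real.exp (-(β y y) / (4 * t))
  have hsplit : ∀ x, ∫ y in Ω, gaussKernel n M x y t * h y
      = gaussKernel n M x 0 t * ∫ y in Ω, (w y * h y) • Real.exp (L y x) := fun x => by
    rw [← integral_const_mul]
    congr with y
    simp only [gaussKernel_eq_mul_exp n M x y, w, L, β, smul_eq_mul, _root_.smul_apply,
      _root_.add_apply, ContinuousLinearMap.flip_apply, toBilin'_toContinuousBilinearMap_apply]
    ring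
  obtain ⟨Cw, hCw⟩ := hΩbd.exists_ae_restrict_norm_le (μ := volume) (f := w) (by fun_prop)
  obtain ⟨CL, hCL⟩ := hΩbd.exists_ae_restrict_norm_le (μ := volume) L.continuous
  simp_rw [hsplit]
  exact (analyticOnNhd_gaussKernel_left n M 0 t).mul
    ((NormedSpace.expSeries ℝ ℝ).analyticOnNhd_integral_smul_comp
      (Real.exp_eq_exp_ℝ ▸ NormedSpace.exp_hasFPowerSeriesOnBall)
      (hh.bdd_mul (by fun_prop : Continuous w).aestronglyMeasurable hCw)
      L.continuous.aestronglyMeasurable hCL)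

/-- for fixed `t > 0`, the Poisson-type integral
`x ↦ ∫_Ω Ψ_M(x,y,t) h(y) dy` is real-analytic on all of `ℝⁿ`. -/
theorem poisson_integral_analytic
    (n : ℕ) (hn : 1 ≤ n) (M : Matrix (Fin n) (Fin n) ℝ) (hM : M.PosDef)
    (t : ℝ) (ht : 0 < t)
    (Ω : Set (Fin n → ℝ)) (hΩmeas : MeasurableSet Ω) (hΩbd : IsBounded Ω)
    (h : (Fin n → ℝ) → ℝ) (hh : IntegrableOn h Ω) :
    AnalyticOnNhd ℝ (fun x => ∫ y in Ω, gaussKernel n M x y t * h y) Set.univ :=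
  poisson_integral_analytic_general n M t Ω hΩbd h hh
end

section
/- Let n ≥ 1, let M be a real symmetric positive definite n×n matrix, let Ω ⊆ ℝⁿ be a bounded measurable set and let h : ℝⁿ → ℝ be integrable on Ω. Define u(x,t) = ∫_Ω Ψ_M(x,y,t)·h(y) dy for t > 0. Then for every point x ∈ ℝⁿ lying outside the closure of Ω, u(x,t) → 0 as t → 0⁺. -/
open Matrix MeasureTheory Bornology Filter Topology

lemma gaussKernel_nonneg (n : ℕ) (M : Matrix (Fin n) (Fin n) ℝ) (x y : Fin n → ℝ) (s : ℝ) :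
    0 ≤ gaussKernel n M x y s :=
  mul_nonneg (zpow_nonneg (by positivity) _) (Real.exp_pos _).le

lemma gaussKernel_le {n : ℕ} (M : Matrix (Fin n) (Fin n) ℝ) {x y : Fin n → ℝ} {s C : ℝ}
    (hs : 0 ≤ s) (hC : C ≤ (x - y) ⬝ᵥ (M⁻¹).mulVec (x - y)) :
    gaussKernel n M x y s ≤
      (2 * Real.sqrt (Real.pi * M.det * s)) ^ (-(n : ℤ)) * Real.exp (-C / (4 * s)) := by
  unfold gaussKernel
  gcongr

lemma exists_pos_le_dotProduct_mulVec_of_notMem {n : ℕ} {A : Matrix (Fin n) (Fin n) ℝ}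
    (hA : A.PosDef) {K : Set (Fin n → ℝ)} (hK : IsCompact K) {x : Fin n → ℝ} (hx : x ∉ K) :
    ∃ C > 0, ∀ y ∈ K, C ≤ (x - y) ⬝ᵥ A.mulVec (x - y) := by
  rcases K.eq_empty_or_nonempty with rfl | hne
  · exact ⟨1, one_pos, by simp⟩
  have hcont : Continuous fun y => (x - y) ⬝ᵥ A.mulVec (x - y) :=
    (continuous_const.sub continuous_id).dotProduct
      (continuous_const.matrix_mulVec (continuous_const.sub continuous_id))
  obtain ⟨y₀, hy₀, hmin⟩ := hK.exists_isMinOn hne hcont.continuousOn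
  refine ⟨_, ?_, fun y hy => hmin hy⟩
  have hne₀ : x - y₀ ≠ 0 := sub_ne_zero.mpr fun h => hx (h ▸ hy₀)
  simpa using hA.re_dotProduct_pos hne₀

lemma norm_integral_mul_le_of_ae_norm_le {α : Type*} [MeasurableSpace α] {μ : Measure α}
    {g h : α → ℝ} {c : ℝ} (hg : ∀ᵐ y ∂μ, ‖g y‖ ≤ c) (hh : Integrable h μ) :
    ‖∫ y, g y * h y ∂μ‖ ≤ c * ∫ y, ‖h y‖ ∂μ := by
  calc ‖∫ y, g y * h y ∂μ‖
      ≤ ∫ y, ‖g y * h y‖ ∂μ := norm_integral_le_integral_norm _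
    _ ≤ ∫ y, c * ‖h y‖ ∂μ := by
        refine integral_mono_of_nonneg (.of_forall fun _ => norm_nonneg _)
          (hh.norm.const_mul c) ?_
        filter_upwards [hg] with y hy
        rw [norm_mul]
        exact mul_le_mul_of_nonneg_right hy (norm_nonneg _)
    _ = c * ∫ y, ‖h y‖ ∂μ := integral_const_mul _ _

lemma tendsto_zpow_two_mul_sqrt_mul_exp_neg_div (n : ℕ) {a C : ℝ} (ha : 0 ≤ a) (hC : 0 < C) :
    Tendsto (fun s => (2 * Real.sqrt (a * s)) ^ (-(n : ℤ)) * Real.exp (-C / (4 * s)))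
      (𝓝[>] 0) (𝓝 0) := by
  set B : ℝ := (2 * Real.sqrt a) ^ (-(n : ℤ))
  -- substituting `s = r⁻¹` turns the kernel into `B * r ^ (n/2) * exp (-(C/4) r)` as `r → ∞`
  have hlim : Tendsto (fun r : ℝ => B * (r ^ ((n : ℝ) / 2) * Real.exp (-(C / 4) * r)))
      atTop (𝓝 0) := by
    simpa using (tendsto_rpow_mul_exp_neg_mul_atTop_nhds_zero _ _ (by positivity)).const_mul B
  refine (hlim.comp tendsto_inv_nhdsGT_zero).congr' ?_
  filter_upwards [self_mem_nhdsWithin] with s (hs : 0 < s)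
  have hpow : Real.sqrt s ^ (-(n : ℤ)) = s⁻¹ ^ ((n : ℝ) / 2) := by
    rw [Real.sqrt_eq_rpow, ← Real.rpow_intCast, ← Real.rpow_mul hs.le, Real.inv_rpow hs.le,
      ← Real.rpow_neg hs.le]
    push_cast
    ring_nf
  have hsqrt : (2 * Real.sqrt (a * s)) ^ (-(n : ℤ)) = B * s⁻¹ ^ ((n : ℝ) / 2) := by
    rw [Real.sqrt_mul ha, ← mul_assoc, mul_zpow, hpow]
  have hexp : -(C / 4) * s⁻¹ = -C / (4 * s) := by field_simp
  simp only [Function.comp_apply, hsqrt, hexp]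
  ring

theorem poisson_integral_tendsto_zero_general
    (n : ℕ) (M : Matrix (Fin n) (Fin n) ℝ) (hM : M.PosDef)
    (Ω : Set (Fin n → ℝ)) (hΩbd : IsBounded Ω)
    (h : (Fin n → ℝ) → ℝ) (hh : IntegrableOn h Ω)
    (u : (Fin n → ℝ) → ℝ → ℝ)
    (hu : ∀ x t, u x t = ∫ y in Ω, gaussKernel n M x y t * h y) :
    ∀ x ∉ closure Ω, Tendsto (fun t => u x t) (𝓝[>] 0) (𝓝 0) := by
  intro x hx
  obtain ⟨C, hC, hCle⟩ :=
    exists_pos_le_dotProduct_mulVec_of_notMem hM.inv hΩbd.isCompact_closure hx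
  set K : ℝ → ℝ := fun t =>
    (2 * Real.sqrt (Real.pi * M.det * t)) ^ (-(n : ℤ)) * Real.exp (-C / (4 * t))
  have hbound : ∀ t > 0, ‖u x t‖ ≤ K t * ∫ y in Ω, ‖h y‖ := by
    intro t ht
    rw [hu]
    refine norm_integral_mul_le_of_ae_norm_le ?_ hh
    refine ae_restrict_of_ae_restrict_of_subset subset_closure ?_
    filter_upwards [ae_restrict_mem isClosed_closure.measurableSet] with y hy
    rw [Real.norm_of_nonneg (gaussKernel_nonneg ..)]
    exact gaussKernel_le M ht.le (hCle y hy)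
  have hK : Tendsto K (𝓝[>] 0) (𝓝 0) :=
    tendsto_zpow_two_mul_sqrt_mul_exp_neg_div n (by positivity [hM.det_pos]) hC
  refine squeeze_zero_norm' (eventually_nhdsWithin_of_forall hbound) ?_
  simpa using hK.mul_const (∫ y in Ω, ‖h y‖)

/-- the Poisson-type parabolic potential
`u(x,t) = ∫_Ω Ψ_M(x,y,t) h(y) dy` tends to `0` as `t → 0⁺` for every `x` outside the
closure of `Ω`. -/
theorem poisson_integral_tendsto_zero
    (n : ℕ) (hn : 1 ≤ n) (M : Matrix (Fin n) (Fin n) ℝ) (hM : M.PosDef)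
    (Ω : Set (Fin n → ℝ)) (hΩmeas : MeasurableSet Ω) (hΩbd : IsBounded Ω)
    (h : (Fin n → ℝ) → ℝ) (hh : IntegrableOn h Ω)
    (u : (Fin n → ℝ) → ℝ → ℝ)
    (hu : ∀ x t, u x t = ∫ y in Ω, gaussKernel n M x y t * h y) :
    ∀ x ∉ closure Ω, Tendsto (fun t => u x t) (𝓝[>] 0) (𝓝 0) :=
  poisson_integral_tendsto_zero_general n M hM Ω hΩbd h hh u hu
end
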